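/- arXiv:1205.3678 — 2 statements merged into one kernel-verified Lean document; each statement's English description precedes it below -/
import Mathlib

section
/- Assume A is an integral domain and let G_ω be a weighted graph. The associated primes of the R-module R/I(G_ω) are exactly the ideals P(V') such that (V', δ') is a minimal weighted vertex cover of G_ω for some function δ' : V' → ℕ. -/
open MvPolynomial

/-- `(S, δ)` is a weighted vertex cover of the weighted graph `(G, w)`:
`δ` takes positive values on `S`, and every edge `{i, j}` is covered by an
endpoint lying in `S` whose weight is at most the weight of the edge. -/
def IsWVC {V : Type*} (G : SimpleGraph V) (w : Sym2 V → ℕ) (S : Finset V) (δ : V → ℕ) : Prop :=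
  (∀ v ∈ S, 1 ≤ δ v) ∧
    ∀ i j, G.Adj i j → (i ∈ S ∧ δ i ≤ w s(i, j)) ∨ (j ∈ S ∧ δ j ≤ w s(i, j))

/-- The order on weighted vertex covers: `(S', δ') ≤ (S, δ)` iff `S' ⊆ S` and
`δ v ≤ δ' v` for all `v ∈ S'`. -/
def WVCle {V : Type*} (S' : Finset V) (δ' : V → ℕ) (S : Finset V) (δ : V → ℕ) : Prop :=
  S' ⊆ S ∧ ∀ v ∈ S', δ v ≤ δ' v

/-- Minimal weighted vertex cover. -/
def IsMinWVC {V : Type*} (G : SimpleGraph V) (w : Sym2 V → ℕ) (S : Finset V) (δ : V → ℕ) :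
    Prop :=
  IsWVC G w S δ ∧ ∀ T ε, IsWVC G w T ε → WVCle T ε S δ → WVCle S δ T ε

/-- A weighted graph is unmixed if all its minimal weighted vertex covers have
the same cardinality. -/
def WUnmixed {V : Type*} (G : SimpleGraph V) (w : Sym2 V → ℕ) : Prop :=
  ∀ S δ T ε, IsMinWVC G w S δ → IsMinWVC G w T ε → S.card = T.card

/-- vertex cover of an (unweighted) graph. -/
def IsVC {V : Type*} (G : SimpleGraph V) (S : Finset V) : Prop :=
  ∀ i j, G.Adj i j → i ∈ S ∨ j ∈ S

def IsMinVC {V : Type*} (G : SimpleGraph V) (S : Finset V) : Prop :=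
  IsVC G S ∧ ∀ T, IsVC G T → T ⊆ S → T = S

def Unmixed {V : Type*} (G : SimpleGraph V) : Prop :=
  ∀ S T, IsMinVC G S → IsMinVC G T → S.card = T.card

/-- The weighted edge ideal. -/
noncomputable def wEdgeIdeal (A : Type*) [CommRing A] {V : Type*} (G : SimpleGraph V)
    (w : Sym2 V → ℕ) : Ideal (MvPolynomial V A) :=
  Ideal.span {m | ∃ i j, G.Adj i j ∧ m = X i ^ w s(i, j) * X j ^ w s(i, j)}

/-- The m-irreducible ideal `P(S, δ)` generated by the pure powers `Xᵥ^(δ v)`, `v ∈ S`. -/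
noncomputable def PIdeal (A : Type*) [CommRing A] {V : Type*} (S : Finset V) (δ : V → ℕ) :
    Ideal (MvPolynomial V A) :=
  Ideal.span {m | ∃ v ∈ S, m = X v ^ δ v}

/-- The monomial prime `P(S)` generated by the variables `Xᵥ`, `v ∈ S`. -/
noncomputable def PPrime (A : Type*) [CommRing A] {V : Type*} (S : Finset V) :
    Ideal (MvPolynomial V A) :=
  Ideal.span {m | ∃ v ∈ S, m = X v}

set_option synthInstance.maxHeartbeats 1000000 in
/-- Cohen-Macaulayness of the quotient of a polynomial ring over a field by a
(monomial, hence graded) ideal `I`: there is a regular sequence on `R ⧸ I`,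
consisting of elements of the image of the irrelevant maximal ideal, whose
length equals the Krull dimension of `R ⧸ I` (i.e. `depth = dim`). -/
def QuotIsCM (A : Type*) [Field A] {V : Type*} (I : Ideal (MvPolynomial V A)) : Prop :=
  ∃ rs : List (MvPolynomial V A ⧸ I),
    (∀ x ∈ rs, x ∈ (Ideal.span (Set.range (X : V → MvPolynomial V A))).map
      (Ideal.Quotient.mk I)) ∧
    RingTheory.Sequence.IsRegular (MvPolynomial V A ⧸ I) rs ∧
    (rs.length : WithBot (WithTop ℕ)) = ringKrullDim (MvPolynomial V A ⧸ I)

/-- The cycle graph on `Fin n`. -/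
def cycleG (n : ℕ) : SimpleGraph (Fin n) := SimpleGraph.fromRel (fun i j => (j : ℕ) = ((i : ℕ) + 1) % n)

/-- The path graph on `Fin n`, with edges `v_i v_{i+1}`. -/
def pathG (n : ℕ) : SimpleGraph (Fin n) :=
  SimpleGraph.fromRel (fun i j => (i : ℕ) + 1 = (j : ℕ))

/-- The suspension of a graph `G`, obtained by attaching a whisker `vᵢwᵢ` at
each vertex `vᵢ` of `G`; the copy `Sum.inl` carries `G` and `Sum.inr` carries
the whisker vertices. -/
def suspension {V : Type*} (G : SimpleGraph V) : SimpleGraph (V ⊕ V) :=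
  SimpleGraph.fromRel (fun x y =>
    match x, y with
    | .inl i, .inl j => G.Adj i j
    | .inl i, .inr j => i = j
    | _, _ => False)

/-!
For a monomial ideal `I` and an associated prime `P = √(I : f)`, take `f` with the fewest terms.
If `x^τ ∉ P`, then `√(I : x^τ f) = P` as well, and reducing `x^τ f` modulo `I` deletes every
term `x^(τ+μ) ∈ I`; minimality of `f` forbids this, so `x^(τ+μ) ∈ I` forces `x^τ ∈ P` for each
term `x^μ` of `f`. Applied to the leading term of `r^n f ∈ I` for `r ∈ P`, this puts the leading
monomial of `r` in `P`, so `P` is generated by variables; applied to a term `x^μ` of `f`, it gives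
`(I : x^μ) ⊆ P`, whence `P = √(I : x^μ)`.

For the weighted edge ideal, `(I : x^a) ⊆ P(S)` means that `(S, a + 1)` is a weighted vertex
cover, and `X_v x^a ∈ I` means that raising the weight of `v` uncovers an edge. A minimal cover
`(S, δ)` therefore gives `(I : x^a) = P(S)` for `a = δ - 1` on `S` (and large off `S`).
Conversely, if `P(S) = √(I : x^ν)`, then `(S, ν + 1)` is a cover, and since `X_v^n x^ν ∈ I` for
`v ∈ S`, every cover below it still contains `v` with weight at most `ν_v + n`; among these
finitely many covers one of largest total weight is minimal.
-/

section Colon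

variable {R : Type*} [CommRing R] {I P : Ideal R} {f : R}

theorem isAssociatedPrime_quotient_iff :
    IsAssociatedPrime P (R ⧸ I) ↔ P.IsPrime ∧ ∃ f : R, P = (I.colon {f}).radical := by
  have hcolon : ∀ f : R,
      (⊥ : Submodule R (R ⧸ I)).colon {Ideal.Quotient.mk I f} = I.colon {f} := by
    intro f
    ext r
    simp only [Submodule.mem_colon_singleton, Submodule.mem_bot, smul_eq_mul,
      Algebra.smul_def, Ideal.Quotient.algebraMap_eq, ← map_mul, Ideal.Quotient.eq_zero_iff_mem]
  simp only [IsAssociatedPrime, Submodule.isAssociatedPrime_def,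
    Ideal.Quotient.mk_surjective.exists, hcolon]

theorem Ideal.colon_singleton_eq_of_sub_mem {g : R} (h : f - g ∈ I) :
    I.colon {f} = I.colon {g} := by
  ext r
  simp only [Submodule.mem_colon_singleton, smul_eq_mul]
  constructor <;> intro hr
  · simpa [mul_sub] using I.sub_mem hr (I.mul_mem_left r h)
  · simpa [mul_sub] using I.add_mem hr (I.mul_mem_left r h)

theorem Ideal.IsPrime.radical_colon_mul_eq (hP : P.IsPrime) (hf : P = (I.colon {f}).radical)
    {t : R} (ht : t ∉ P) : P = (I.colon {t * f}).radical := by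
  refine le_antisymm (hf.le.trans (Ideal.radical_mono fun r hr => ?_)) fun r hr => ?_
  · rw [Submodule.mem_colon_singleton, smul_eq_mul] at hr ⊢
    simpa [mul_left_comm] using I.mul_mem_left t hr
  · obtain ⟨n, hn⟩ := Ideal.mem_radical_iff.mp hr
    rw [Submodule.mem_colon_singleton, smul_eq_mul, ← mul_assoc] at hn
    have hnt : r ^ n * t ∈ P := hf ▸ Ideal.le_radical (Submodule.mem_colon_singleton.mpr hn)
    exact (hP.mem_or_mem hnt).resolve_right ht |> hP.mem_of_pow_mem n

theorem Ideal.IsPrime.ne_zero_of_eq_radical_colon (hP : P.IsPrime)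
    (hf : P = (I.colon {f}).radical) : f ≠ 0 := by
  rintro rfl
  exact hP.ne_top (by rw [hf, Submodule.colon_singleton_zero, Ideal.radical_top])

end Colon

universe u

namespace MvPolynomial

variable {σ R : Type*} [CommRing R]

-- `MonomialOrder.lex` needs `WellFoundedGT σ`, hence the dual of a well-order.
theorem exists_monomialOrder (σ : Type u) : Nonempty (MonomialOrder.{u, u} σ) := by
  let _ : LinearOrder σ := IsWellOrder.linearOrder WellOrderingRel
  let _ : LinearOrder σ := OrderDual.instLinearOrder σ
  have : WellFoundedGT σ := ⟨WellOrderingRel.isWellOrder.wf⟩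
  exact ⟨MonomialOrder.lex⟩

theorem _root_.Ideal.IsPrime.exists_X_mem_of_monomial_mem {P : Ideal (MvPolynomial σ R)}
    (hP : P.IsPrime) {d : σ →₀ ℕ} (h : monomial d 1 ∈ P) : ∃ v, d v ≠ 0 ∧ X v ∈ P := by
  rw [monomial_eq, C_1, one_mul, Finsupp.prod] at h
  obtain ⟨v, hv, hvP⟩ := hP.prod_mem_iff.mp h
  exact ⟨v, Finsupp.mem_support_iff.mp hv, hP.mem_of_pow_mem _ hvP⟩

theorem le_of_forall_monomial_degree_mem (m : MonomialOrder σ) {P Q : Ideal (MvPolynomial σ R)}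
    (h : ∀ r ∈ P, r ≠ 0 → monomial (m.degree r) 1 ∈ P ⊓ Q) : P ≤ Q := by
  intro r hr
  induction hd : m.toSyn (m.degree r) using WellFoundedLT.induction generalizing r with
  | _ d ih =>
  rcases eq_or_ne r 0 with rfl | hr0
  · exact Q.zero_mem
  have hlt : m.leadingTerm r ∈ P ⊓ Q := by
    rw [MonomialOrder.leadingTerm, ← mul_one (m.leadingCoeff r), ← C_mul_monomial]
    exact (P ⊓ Q).mul_mem_left _ (h r hr hr0)
  have hsub : m.subLTerm r ∈ Q := by
    by_cases hd0 : m.degree r = 0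
    · rw [MonomialOrder.subLTerm, hd0, ← C_apply, ← m.eq_C_of_degree_eq_zero hd0, sub_self]
      exact Q.zero_mem
    · exact ih _ (hd ▸ MonomialOrder.degree_sub_LTerm_lt hd0) (P.sub_mem hr hlt.1) rfl
  have := Q.add_mem hsub hlt.2
  rwa [MonomialOrder.subLTerm, ← MonomialOrder.leadingTerm, sub_add_cancel] at this

theorem isPrime_span_X_image [IsDomain R] (s : Set σ) :
    (Ideal.span (X '' s : Set (MvPolynomial σ R))).IsPrime := by
  classical
  set J := Ideal.span (X '' s : Set (MvPolynomial σ R))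
  let φ : MvPolynomial σ R →ₐ[R] MvPolynomial σ R := aeval fun v => if v ∈ s then 0 else X v
  have hφ : (Ideal.Quotient.mkₐ R J).comp φ = Ideal.Quotient.mkₐ R J := by
    refine algHom_ext fun v => ?_
    by_cases hv : v ∈ s
    · have hXv : X v ∈ J := Ideal.subset_span (Set.mem_image_of_mem X hv)
      simpa [φ, hv] using (Ideal.Quotient.eq_zero_iff_mem.mpr hXv).symm
    · simp [φ, hv]
  have hker : RingHom.ker φ = J := by
    refine le_antisymm (fun r hr => ?_) (Ideal.span_le.mpr ?_)
    · rw [← Ideal.Quotient.eq_zero_iff_mem, ← Ideal.Quotient.mkₐ_eq_mk R, ← hφ]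
      simp [(RingHom.mem_ker).mp hr]
    · rintro _ ⟨v, hv, rfl⟩
      simp [φ, hv]
  exact hker ▸ RingHom.ker_isPrime φ

theorem exists_sub_mem_forall_monomial_notMem (I : Ideal (MvPolynomial σ R))
    (f : MvPolynomial σ R) :
    ∃ g, f - g ∈ I ∧ g.support ⊆ f.support ∧ ∀ μ ∈ g.support, monomial μ 1 ∉ I := by
  classical
  set h := ∑ μ ∈ f.support with monomial μ 1 ∈ I, monomial μ (coeff μ f)
  have hh : h ∈ I := I.sum_mem fun μ hμ => by
    rw [← mul_one (coeff μ f), ← C_mul_monomial]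
    exact I.mul_mem_left _ (Finset.mem_filter.mp hμ).2
  have hcoeff : ∀ μ, coeff μ (f - h) = if monomial μ 1 ∈ I then 0 else coeff μ f := by
    intro μ
    simp only [h, coeff_sub, coeff_sum, coeff_monomial, Finset.sum_ite_eq', Finset.mem_filter,
      mem_support_iff]
    split_ifs <;> simp_all
  refine ⟨f - h, by simpa using hh, fun μ hμ => ?_, fun μ hμ hμI => ?_⟩ <;>
    rw [mem_support_iff, hcoeff] at hμ
  · split_ifs at hμ
    exacts [absurd rfl hμ, mem_support_iff.mpr hμ]
  · exact hμ (if_pos hμI)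

def IsMonomialIdeal (I : Ideal (MvPolynomial σ R)) : Prop :=
  ∀ f ∈ I, ∀ μ ∈ f.support, monomial μ 1 ∈ I

theorem isMonomialIdeal_span_monomial (s : Set (σ →₀ ℕ)) :
    IsMonomialIdeal (Ideal.span ((fun μ => monomial μ (1 : R)) '' s)) := by
  intro f hf μ hμ
  obtain ⟨ν, hν, hνμ⟩ := mem_ideal_span_monomial_image.mp hf μ hμ
  have hfac : monomial μ (1 : R) = monomial (μ - ν) 1 * monomial ν 1 := by
    rw [monomial_mul, one_mul, tsub_add_cancel_of_le hνμ]
  exact hfac ▸ Ideal.mul_mem_left _ _ (Ideal.subset_span ⟨ν, hν, rfl⟩)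

theorem IsMonomialIdeal.mem_iff {I : Ideal (MvPolynomial σ R)} (hI : IsMonomialIdeal I)
    {f : MvPolynomial σ R} : f ∈ I ↔ ∀ μ ∈ f.support, monomial μ 1 ∈ I := by
  refine ⟨hI f, fun h => ?_⟩
  rw [f.as_sum]
  refine I.sum_mem fun μ hμ => ?_
  rw [← mul_one (coeff μ f), ← C_mul_monomial]
  exact I.mul_mem_left _ (h μ hμ)

theorem IsMonomialIdeal.mul_monomial_mem_iff {I : Ideal (MvPolynomial σ R)}
    (hI : IsMonomialIdeal I) {g : MvPolynomial σ R} {a : σ →₀ ℕ} :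
    g * monomial a 1 ∈ I ↔ ∀ τ ∈ g.support, monomial (τ + a) 1 ∈ I := by
  classical
  rw [hI.mem_iff]
  refine ⟨fun h τ hτ => h _ ?_, fun h μ hμ => ?_⟩
  · rwa [mem_support_iff, coeff_mul_monomial, mul_one, ← mem_support_iff]
  · rw [mem_support_iff, coeff_mul_monomial'] at hμ
    split_ifs at hμ with haμ
    · rw [← tsub_add_cancel_of_le haμ]
      exact h _ (mem_support_iff.mpr fun h0 => hμ (by rw [h0, zero_mul]))
    · exact absurd rfl hμ

def IsMinimalWitness (I P : Ideal (MvPolynomial σ R)) (f : MvPolynomial σ R) : Prop :=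
  P = (I.colon {f}).radical ∧ ∀ g, P = (I.colon {g}).radical → f.support.card ≤ g.support.card

theorem _root_.IsAssociatedPrime.exists_isMinimalWitness {I P : Ideal (MvPolynomial σ R)}
    (hP : IsAssociatedPrime P (MvPolynomial σ R ⧸ I)) : ∃ f, IsMinimalWitness I P f := by
  obtain ⟨-, f₀, hf₀⟩ := isAssociatedPrime_quotient_iff.mp hP
  obtain ⟨f, hf, hmin⟩ := (measure fun g : MvPolynomial σ R => g.support.card).wf.has_min
    {g | P = (I.colon {g}).radical} ⟨f₀, hf₀⟩
  exact ⟨f, hf, fun g hg => not_lt.mp (hmin g hg)⟩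

namespace IsMinimalWitness

variable {I P : Ideal (MvPolynomial σ R)} {f : MvPolynomial σ R}

theorem monomial_add_notMem (hf : IsMinimalWitness I P f) (hP : P.IsPrime) {τ : σ →₀ ℕ}
    {c : R} (hc : monomial τ c ∉ P) {μ : σ →₀ ℕ} (hμ : μ ∈ f.support) :
    monomial (τ + μ) 1 ∉ I := by
  classical
  intro hτμ
  obtain ⟨g, hfg, hgf, hg⟩ := exists_sub_mem_forall_monomial_notMem I (monomial τ c * f)
  have hgP : P = (I.colon {g}).radical := by
    rw [← Ideal.colon_singleton_eq_of_sub_mem hfg]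
    exact hP.radical_colon_mul_eq hf.1 hc
  have hsupp : g.support ⊆ (f.support.erase μ).image (τ + ·) := by
    intro ρ hρ
    have hρ' := mem_support_iff.mp (hgf hρ)
    rw [coeff_monomial_mul'] at hρ'
    split_ifs at hρ' with hτρ
    · refine Finset.mem_image.mpr
        ⟨ρ - τ, Finset.mem_erase.mpr ⟨?_, ?_⟩, add_tsub_cancel_of_le hτρ⟩
      · rintro hρμ
        exact hg ρ hρ (by rwa [← hρμ, add_tsub_cancel_of_le hτρ] at hτμ)
      · exact mem_support_iff.mpr (right_ne_zero_of_mul hρ')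
    · exact absurd rfl hρ'
  have := (hf.2 g hgP).trans ((Finset.card_le_card hsupp).trans Finset.card_image_le)
  rw [Finset.card_erase_of_mem hμ] at this
  have := Finset.card_pos.mpr ⟨μ, hμ⟩
  omega

theorem colon_monomial_le (hf : IsMinimalWitness I P f) (hP : P.IsPrime)
    (hI : IsMonomialIdeal I) {μ : σ →₀ ℕ} (hμ : μ ∈ f.support) :
    I.colon {monomial μ 1} ≤ P := by
  intro g hg
  rw [Submodule.mem_colon_singleton, smul_eq_mul, hI.mul_monomial_mem_iff] at hg
  rw [g.as_sum]
  refine P.sum_mem fun τ hτ => ?_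
  by_contra hτP
  exact hf.monomial_add_notMem hP hτP hμ (hg τ hτ)

theorem monomial_degree_mem [IsDomain R] (hf : IsMinimalWitness I P f) (hP : P.IsPrime)
    (hI : IsMonomialIdeal I) (m : MonomialOrder σ) {r : MvPolynomial σ R} (hr : r ∈ P)
    (hr0 : r ≠ 0) : monomial (m.degree r) 1 ∈ P := by
  obtain ⟨n, hn⟩ := Ideal.mem_radical_iff.mp (hf.1 ▸ hr)
  rw [Submodule.mem_colon_singleton, smul_eq_mul] at hn
  have hf0 := hP.ne_zero_of_eq_radical_colon hf.1
  have hrnf : r ^ n * f ≠ 0 := mul_ne_zero (pow_ne_zero n hr0) hf0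
  have hdeg : m.degree (r ^ n * f) = n • m.degree r + m.degree f := by
    rw [m.degree_mul (pow_ne_zero n hr0) hf0, m.degree_pow]
  by_contra hd
  have hpow : monomial (n • m.degree r) (1 : R) ∉ P := by
    rw [← one_pow n, ← monomial_pow]
    exact fun h => hd (hP.mem_of_pow_mem n h)
  exact hf.monomial_add_notMem hP hpow (m.degree_mem_support hf0)
    (hdeg ▸ hI _ hn _ (m.degree_mem_support hrnf))

theorem eq_span_X [IsDomain R] (hf : IsMinimalWitness I P f) (hP : P.IsPrime)
    (hI : IsMonomialIdeal I) : P = Ideal.span (X '' {v | X v ∈ P}) := by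
  obtain ⟨m⟩ := exists_monomialOrder σ
  refine le_antisymm (le_of_forall_monomial_degree_mem m fun r hr hr0 => ?_)
    (Ideal.span_le.mpr (Set.image_subset_iff.mpr fun v hv => hv))
  have hd := hf.monomial_degree_mem hP hI m hr hr0
  obtain ⟨v, hv, hXv⟩ := hP.exists_X_mem_of_monomial_mem hd
  refine ⟨hd, mem_ideal_span_X_image.mpr fun μ hμ => ⟨v, hXv, ?_⟩⟩
  rwa [Finset.mem_singleton.mp (support_monomial_subset hμ)]

theorem eq_radical_colon_monomial [IsDomain R] (hf : IsMinimalWitness I P f)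
    (hP : P.IsPrime) (hI : IsMonomialIdeal I) {μ : σ →₀ ℕ} (hμ : μ ∈ f.support) :
    P = (I.colon {monomial μ 1}).radical := by
  refine le_antisymm ?_
    ((Ideal.radical_mono (hf.colon_monomial_le hP hI hμ)).trans hP.radical.le)
  rw [hf.eq_span_X hP hI, Ideal.span_le]
  rintro _ ⟨v, hv, rfl⟩
  obtain ⟨n, hn⟩ := Ideal.mem_radical_iff.mp (hf.1 ▸ hv : X v ∈ (I.colon {f}).radical)
  rw [Submodule.mem_colon_singleton, smul_eq_mul, X_pow_eq_monomial] at hn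
  refine Ideal.mem_radical_iff.mpr ⟨n, ?_⟩
  rw [Submodule.mem_colon_singleton, smul_eq_mul, X_pow_eq_monomial, monomial_mul, one_mul]
  refine hI _ hn _ (mem_support_iff.mpr ?_)
  rwa [coeff_monomial_mul, one_mul, ← mem_support_iff]

end IsMinimalWitness

theorem IsMonomialIdeal.eq_span_X_of_isAssociatedPrime [IsDomain R]
    {I P : Ideal (MvPolynomial σ R)} (hI : IsMonomialIdeal I)
    (hP : IsAssociatedPrime P (MvPolynomial σ R ⧸ I)) : P = Ideal.span (X '' {v | X v ∈ P}) :=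
  have ⟨_, hf⟩ := hP.exists_isMinimalWitness
  hf.eq_span_X hP.isPrime hI

theorem IsMonomialIdeal.exists_eq_radical_colon_monomial [IsDomain R]
    {I P : Ideal (MvPolynomial σ R)} (hI : IsMonomialIdeal I)
    (hP : IsAssociatedPrime P (MvPolynomial σ R ⧸ I)) :
    ∃ μ, P = (I.colon {monomial μ 1}).radical := by
  obtain ⟨f, hf⟩ := hP.exists_isMinimalWitness
  obtain ⟨μ, hμ⟩ := support_nonempty.mpr (hP.isPrime.ne_zero_of_eq_radical_colon hf.1)
  exact ⟨μ, hf.eq_radical_colon_monomial hP.isPrime hI hμ⟩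

end MvPolynomial

section WeightedGraph

variable {V : Type*} {G : SimpleGraph V} {w : Sym2 V → ℕ} {S : Finset V} {δ : V → ℕ}

theorem WVCle.trans {T U : Finset V} {ε η : V → ℕ} (h₁ : WVCle S δ T ε) (h₂ : WVCle T ε U η) :
    WVCle S δ U η :=
  ⟨h₁.1.trans h₂.1, fun v hv => (h₂.2 v (h₁.1 hv)).trans (h₁.2 v hv)⟩

theorem IsMinWVC.exists_adj_tight (h : IsMinWVC G w S δ) {v : V} (hv : v ∈ S) :
    ∃ u, G.Adj v u ∧ w s(v, u) = δ v ∧ ¬(u ∈ S ∧ δ u ≤ w s(v, u)) := by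
  classical
  by_contra! hcon
  set δ' := Function.update δ v (δ v + 1)
  have hcov : ∀ i j, G.Adj i j → i ∈ S ∧ δ i ≤ w s(i, j) →
      (i ∈ S ∧ δ' i ≤ w s(i, j)) ∨ (j ∈ S ∧ δ' j ≤ w s(i, j)) := by
    rintro i j hij ⟨hiS, hδi⟩
    rcases eq_or_ne i v with rfl | hiv
    · rcases hδi.lt_or_eq with hlt | heq
      · exact Or.inl ⟨hiS, by simpa [δ'] using hlt⟩
      · obtain ⟨hjS, hδj⟩ := hcon j hij heq.symm
        exact Or.inr ⟨hjS, by simpa [δ', hij.ne'] using hδj⟩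
    · exact Or.inl ⟨hiS, by simpa [δ', hiv] using hδi⟩
  have hwvc : IsWVC G w S δ' := by
    refine ⟨fun u hu => ?_, fun i j hij => ?_⟩
    · rcases eq_or_ne u v with rfl | huv
      · simp [δ']
      · simpa [δ', huv] using h.1.1 u hu
    rcases h.1.2 i j hij with hi | hj
    · exact hcov i j hij hi
    · rw [Sym2.eq_swap] at hj ⊢
      exact (hcov j i hij.symm hj).symm
  have := (h.2 S δ' hwvc ⟨subset_rfl, fun u _ => ?_⟩).2 v hv
  · simp [δ'] at this
  · rcases eq_or_ne u v with rfl | huv <;> simp [δ', *]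

theorem IsWVC.mem_and_le_of_adj {T : Finset V} {ε : V → ℕ} (hT : IsWVC G w T ε)
    {ν : V →₀ ℕ} (hν : ∀ u ∈ T, ν u < ε u) {v : V} {n : ℕ} {i j : V} (hij : G.Adj i j)
    (hi : w s(i, j) ≤ (ν + Finsupp.single v n) i) (hj : w s(i, j) ≤ (ν + Finsupp.single v n) j) :
    v ∈ T ∧ ε v ≤ ν v + n := by
  classical
  have key : ∀ u ∈ T, ε u ≤ w s(i, j) → w s(i, j) ≤ (ν + Finsupp.single v n) u →
      v ∈ T ∧ ε v ≤ ν v + n := by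
    intro u hu hεu hwu
    rw [Finsupp.add_apply, Finsupp.single_apply] at hwu
    split_ifs at hwu with hvu
    · exact hvu ▸ ⟨hu, by omega⟩
    · have := hν u hu
      omega
  rcases hT.2 i j hij with ⟨hiT, hεi⟩ | ⟨hjT, hεj⟩
  exacts [key i hiT hεi hi, key j hjT hεj hj]

theorem IsWVC.exists_isMinWVC (h : IsWVC G w S δ)
    (hb : ∀ v ∈ S, ∃ b, ∀ T ε, IsWVC G w T ε → WVCle T ε S δ → v ∈ T ∧ ε v ≤ b) :
    ∃ ε, IsMinWVC G w S ε := by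
  choose! b hb using hb
  set s : Set ℕ := {k | ∃ ε, IsWVC G w S ε ∧ WVCle S ε S δ ∧ ∑ v ∈ S, ε v = k}
  have hbdd : BddAbove s := ⟨∑ v ∈ S, b v, by
    rintro _ ⟨ε, hε, hle, rfl⟩
    exact Finset.sum_le_sum fun v hv => (hb v hv S ε hε hle).2⟩
  have hδ : ∑ v ∈ S, δ v ∈ s := ⟨δ, h, ⟨subset_rfl, fun _ _ => le_rfl⟩, rfl⟩
  obtain ⟨ε₀, hε₀, hle₀, hsum⟩ := Nat.sSup_mem ⟨_, hδ⟩ hbdd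
  refine ⟨ε₀, hε₀, fun T ε hT hle => ?_⟩
  obtain rfl : T = S := hle.1.antisymm fun v hv => (hb v hv T ε hT (hle.trans hle₀)).1
  have hsum_le : ∑ v ∈ T, ε v ≤ ∑ v ∈ T, ε₀ v :=
    hsum ▸ le_csSup hbdd ⟨ε, hT, hle.trans hle₀, rfl⟩
  have heq := (Finset.sum_eq_sum_iff_of_le hle.2).mp
    (le_antisymm (Finset.sum_le_sum hle.2) hsum_le)
  exact ⟨subset_rfl, fun v hv => (heq v hv).ge⟩

end WeightedGraph

section WeightedEdgeIdeal

variable {A : Type*} [CommRing A] {V : Type*} {G : SimpleGraph V} {w : Sym2 V → ℕ}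
  {S : Finset V} {δ : V → ℕ}

theorem wEdgeIdeal_eq_span_monomial :
    wEdgeIdeal A G w = Ideal.span ((fun μ => monomial μ (1 : A)) '' {μ | ∃ i j, G.Adj i j ∧
      μ = Finsupp.single i (w s(i, j)) + Finsupp.single j (w s(i, j))}) := by
  unfold wEdgeIdeal
  congr 1
  ext m
  constructor
  · rintro ⟨i, j, hij, rfl⟩
    exact ⟨_, ⟨i, j, hij, rfl⟩,
      by rw [X_pow_eq_monomial, X_pow_eq_monomial, monomial_mul, one_mul]⟩
  · rintro ⟨μ, ⟨i, j, hij, rfl⟩, rfl⟩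
    exact ⟨i, j, hij, by rw [X_pow_eq_monomial, X_pow_eq_monomial, monomial_mul, one_mul]⟩

theorem isMonomialIdeal_wEdgeIdeal : IsMonomialIdeal (wEdgeIdeal A G w) := by
  rw [wEdgeIdeal_eq_span_monomial]
  exact isMonomialIdeal_span_monomial _

theorem monomial_one_mem_wEdgeIdeal_iff [Nontrivial A] {μ : V →₀ ℕ} :
    monomial μ (1 : A) ∈ wEdgeIdeal A G w ↔
      ∃ i j, G.Adj i j ∧ w s(i, j) ≤ μ i ∧ w s(i, j) ≤ μ j := by
  classical
  rw [wEdgeIdeal_eq_span_monomial, mem_ideal_span_monomial_image, support_monomial,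
    if_neg one_ne_zero]
  simp only [Finset.mem_singleton, forall_eq]
  constructor
  · rintro ⟨_, ⟨i, j, hij, rfl⟩, hle⟩
    exact ⟨i, j, hij, by simpa [hij.ne'] using hle i, by simpa [hij.ne] using hle j⟩
  · rintro ⟨i, j, hij, hi, hj⟩
    refine ⟨_, ⟨i, j, hij, rfl⟩, fun v => ?_⟩
    simp only [Finsupp.add_apply, Finsupp.single_apply]
    split_ifs <;> subst_vars <;> first | omega | exact absurd rfl hij.ne

theorem PPrime_eq_span_X_image (S : Finset V) : PPrime A S = Ideal.span (X '' (S : Set V)) := by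
  simp only [PPrime, Set.image, eq_comm (a := X _), Finset.mem_coe]

theorem mem_PPrime_iff {f : MvPolynomial V A} :
    f ∈ PPrime A S ↔ ∀ μ ∈ f.support, ∃ v ∈ S, μ v ≠ 0 := by
  simp [PPrime_eq_span_X_image, mem_ideal_span_X_image]

theorem isPrime_PPrime [IsDomain A] (S : Finset V) : (PPrime A S).IsPrime :=
  PPrime_eq_span_X_image (A := A) S ▸ isPrime_span_X_image _

theorem IsWVC.colon_le_PPrime [Nontrivial A] (h : IsWVC G w S δ) {a : V →₀ ℕ}
    (ha : ∀ v ∈ S, a v < δ v) : (wEdgeIdeal A G w).colon {monomial a 1} ≤ PPrime A S := by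
  intro g hg
  rw [Submodule.mem_colon_singleton, smul_eq_mul,
    isMonomialIdeal_wEdgeIdeal.mul_monomial_mem_iff] at hg
  refine mem_PPrime_iff.mpr fun τ hτ => ?_
  obtain ⟨i, j, hij, hi, hj⟩ := monomial_one_mem_wEdgeIdeal_iff.mp (hg τ hτ)
  rw [Finsupp.add_apply] at hi hj
  rcases h.2 i j hij with ⟨hiS, hδi⟩ | ⟨hjS, hδj⟩
  · exact ⟨i, hiS, by have := ha i hiS; omega⟩
  · exact ⟨j, hjS, by have := ha j hjS; omega⟩

theorem isWVC_of_colon_le_PPrime [Nontrivial A] [Finite V] {ν : V →₀ ℕ}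
    (h : (wEdgeIdeal A G w).colon {monomial ν 1} ≤ PPrime A S) :
    IsWVC G w S fun v => ν v + 1 := by
  classical
  refine ⟨fun _ _ => Nat.le_add_left 1 _, fun i j hij => ?_⟩
  by_contra! hcov
  let τ : V →₀ ℕ := Finsupp.equivFunOnFinite.symm fun v => if v ∈ S then 0 else w s(i, j)
  have hτ : monomial τ (1 : A) ∈ (wEdgeIdeal A G w).colon {monomial ν 1} := by
    rw [Submodule.mem_colon_singleton, smul_eq_mul, monomial_mul, one_mul,
      monomial_one_mem_wEdgeIdeal_iff]
    refine ⟨i, j, hij, ?_, ?_⟩ <;> simp only [τ, Finsupp.add_apply,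
      Finsupp.coe_equivFunOnFinite_symm] <;> split_ifs <;> grind
  obtain ⟨v, hv, hτv⟩ := mem_PPrime_iff.mp (h hτ) τ (by simp)
  simp [τ, hv] at hτv

theorem IsMinWVC.PPrime_le_colon [Nontrivial A] (h : IsMinWVC G w S δ) {a : V →₀ ℕ}
    (hS : ∀ v ∈ S, a v + 1 = δ v) (hSc : ∀ u ∉ S, ∀ v, w s(v, u) ≤ a u) :
    PPrime A S ≤ (wEdgeIdeal A G w).colon {monomial a 1} := by
  classical
  rw [PPrime_eq_span_X_image, Ideal.span_le]
  rintro _ ⟨v, hv, rfl⟩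
  obtain ⟨u, hvu, hw, hu⟩ := h.exists_adj_tight hv
  rw [SetLike.mem_coe, Submodule.mem_colon_singleton, smul_eq_mul, X, monomial_mul, one_mul,
    monomial_one_mem_wEdgeIdeal_iff]
  refine ⟨v, u, hvu, ?_, ?_⟩
  · simp [← hS v hv, hw, add_comm]
  · rw [Finsupp.add_apply, Finsupp.single_eq_of_ne hvu.ne', zero_add]
    by_cases huS : u ∈ S
    · have := hS u huS
      grind
    · exact hSc u huS v

theorem isAssociatedPrime_PPrime_of_isMinWVC [IsDomain A] [Finite V] (h : IsMinWVC G w S δ) :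
    IsAssociatedPrime (PPrime A S) (MvPolynomial V A ⧸ wEdgeIdeal A G w) := by
  classical
  obtain ⟨N, hN⟩ := (Set.finite_range w).bddAbove
  let a : V →₀ ℕ := Finsupp.equivFunOnFinite.symm fun v => if v ∈ S then δ v - 1 else N
  have haS : ∀ v ∈ S, a v + 1 = δ v := fun v hv => by
    have := h.1.1 v hv
    simp only [a, Finsupp.coe_equivFunOnFinite_symm, if_pos hv]
    omega
  have hcolon : (wEdgeIdeal A G w).colon {monomial a 1} = PPrime A S :=
    le_antisymm (h.1.colon_le_PPrime fun v hv => by have := haS v hv; omega)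
      (h.PPrime_le_colon haS fun u hu v => by simpa [a, hu] using hN ⟨s(v, u), rfl⟩)
  refine isAssociatedPrime_quotient_iff.mpr ⟨isPrime_PPrime S, monomial a 1, ?_⟩
  rw [hcolon, (isPrime_PPrime S).radical]

theorem exists_isMinWVC_of_isAssociatedPrime [IsDomain A] [Fintype V]
    {P : Ideal (MvPolynomial V A)}
    (hP : IsAssociatedPrime P (MvPolynomial V A ⧸ wEdgeIdeal A G w)) :
    ∃ S δ, IsMinWVC G w S δ ∧ P = PPrime A S := by
  classical
  have hspan := isMonomialIdeal_wEdgeIdeal.eq_span_X_of_isAssociatedPrime hP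
  obtain ⟨ν, hν⟩ := isMonomialIdeal_wEdgeIdeal.exists_eq_radical_colon_monomial hP
  set S := Finset.univ.filter fun v => X v ∈ P
  have hPS : P = PPrime A S := by
    rw [PPrime_eq_span_X_image]
    convert hspan using 3
    simp [S]
  have hwvc := isWVC_of_colon_le_PPrime (hPS ▸ hν ▸ Ideal.le_radical)
  obtain ⟨δ, hδ⟩ := hwvc.exists_isMinWVC fun v hv => by
    obtain ⟨n, hn⟩ := Ideal.mem_radical_iff.mp (hν ▸ (Finset.mem_filter.mp hv).2)
    rw [Submodule.mem_colon_singleton, smul_eq_mul, X_pow_eq_monomial, monomial_mul, one_mul,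
      monomial_one_mem_wEdgeIdeal_iff] at hn
    obtain ⟨i, j, hij, hi, hj⟩ := hn
    exact ⟨ν v + n, fun T ε hT hle => hT.mem_and_le_of_adj hle.2 hij
      (by rwa [add_comm]) (by rwa [add_comm])⟩
  exact ⟨S, δ, hδ, hPS⟩

end WeightedEdgeIdeal

set_option synthInstance.maxHeartbeats 1000000 in
theorem stmt_6_general (A : Type*) [CommRing A] [IsDomain A] {V : Type*} [Fintype V]
    (G : SimpleGraph V) (w : Sym2 V → ℕ) :
    associatedPrimes (MvPolynomial V A) (MvPolynomial V A ⧸ wEdgeIdeal A G w) =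
      {P | ∃ (S : Finset V) (δ : V → ℕ), IsMinWVC G w S δ ∧ P = PPrime A S} := by
  ext P
  refine ⟨exists_isMinWVC_of_isAssociatedPrime, ?_⟩
  rintro ⟨S, δ, h, rfl⟩
  exact isAssociatedPrime_PPrime_of_isMinWVC h

set_option synthInstance.maxHeartbeats 1000000 in
/-- the associated primes of `R/I(G_ω)` are the ideals `P(V')`
such that `(V', δ')` is a minimal weighted vertex cover for some `δ'`. -/
theorem stmt_6 (A : Type*) [CommRing A] [IsDomain A] {V : Type*} [Fintype V]
    (G : SimpleGraph V) (w : Sym2 V → ℕ) (hw : ∀ e ∈ G.edgeSet, 1 ≤ w e) :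
    associatedPrimes (MvPolynomial V A) (MvPolynomial V A ⧸ wEdgeIdeal A G w) =
      {P | ∃ (S : Finset V) (δ : V → ℕ), IsMinWVC G w S δ ∧ P = PPrime A S} :=
  stmt_6_general A G w
end

section
/- Let A be a field. Every weighted 3-cycle C^3_ω is Cohen-Macaulay, i.e., the quotient ring R/I(C^3_ω) is Cohen-Macaulay. -/
open MvPolynomial

/-
The ideal `I = (X₀ᵃX₁ᵃ, X₁ᵇX₂ᵇ, X₂ᶜX₀ᶜ)` is the intersection of six monomial ideals
`(Xᵢ^α, Xⱼ^β)`, one for each two-variable clause of the conjunctive normal form of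
"some generator divides `m`". Modulo such an ideal the third variable `X_k` is free, so
`X₀ + X₁ + X₂` is monic in `X_k` and hence a nonzerodivisor; therefore it is a nonzerodivisor
modulo `I`, and `depth R/I ≥ 1`. On the other hand a prime containing `I` contains the
variables of a vertex cover of the triangle, i.e. at least two variables, and
`(X₀, X₁) ⊇ I` shows this is attained, so `dim R/I = 1`.
-/

theorem ringKrullDim_quotient_le_of_forall_isPrime {R ι : Type*} [CommRing R] (I : Ideal R)
    (J : ι → Ideal R) {n : WithBot ℕ∞} (hJ : ∀ i, ringKrullDim (R ⧸ J i) ≤ n)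
    (hI : ∀ p : Ideal R, p.IsPrime → I ≤ p → ∃ i, J i ≤ p) : ringKrullDim (R ⧸ I) ≤ n := by
  rw [ringKrullDim_quotient, Order.krullDim_eq_iSup_coheight, iSup_le_iff]
  intro p
  obtain ⟨i, hi⟩ := hI p.1.asIdeal p.1.isPrime ((PrimeSpectrum.mem_zeroLocus _ _).mp p.2)
  rw [Order.coheight_eq_krullDim_Ici]
  calc Order.krullDim (Set.Ici p)
      ≤ Order.krullDim (PrimeSpectrum.zeroLocus (R := R) (J i)) :=
        Order.krullDim_le_of_strictMono
          (fun q ↦ ⟨q.1.1, (PrimeSpectrum.mem_zeroLocus _ _).mpr (hi.trans q.2)⟩)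
          fun _ _ h ↦ h
    _ = ringKrullDim (R ⧸ J i) := (ringKrullDim_quotient _).symm
    _ ≤ n := hJ i

theorem Finsupp.single_add_single_le_iff {σ : Type*} {i j : σ} (hij : i ≠ j) {a b : ℕ}
    {m : σ →₀ ℕ} : Finsupp.single i a + Finsupp.single j b ≤ m ↔ a ≤ m i ∧ b ≤ m j := by
  classical
  simp only [Finsupp.le_def, Finsupp.add_apply, Finsupp.single_apply]
  refine ⟨fun h ↦ ⟨by simpa [hij.symm] using h i, by simpa [hij] using h j⟩, ?_⟩
  rintro ⟨hi, hj⟩ v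
  split_ifs <;> subst_vars <;> simp_all

namespace MvPolynomial

theorem forall_support_of_forall_support_sum_X_mul {R σ : Type*} [CommSemiring R]
    {C : (σ →₀ ℕ) → Prop} (hC : Monotone C) {k : σ}
    (hk : ∀ m, C (Finsupp.single k 1 + m) → C m) {T : Finset σ} (hkT : k ∈ T)
    {g : MvPolynomial σ R} (h : ∀ n ∈ ((∑ v ∈ T, X v) * g).support, C n) :
    ∀ m ∈ g.support, C m := by
  classical
  by_contra! hg
  obtain ⟨m, hm, hmax⟩ := Finset.exists_max_image (g.support.filter (¬ C ·)) (· k)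
    (by obtain ⟨m, hm, hCm⟩ := hg; exact ⟨m, by simp [hm, hCm]⟩)
  rw [Finset.mem_filter] at hm
  -- in `(∑ X v) * g`, only `X k * g` contributes to `X_k m`: any other contribution would come
  -- from a monomial of `g` violating `C` with a larger `k`-exponent than `m`
  have hcoeff : coeff (Finsupp.single k 1 + m) ((∑ v ∈ T, X v) * g) = coeff m g := by
    rw [Finset.sum_mul, coeff_sum, Finset.sum_eq_single k _ (absurd hkT), coeff_X_mul]
    intro v _ hvk
    rw [coeff_X_mul']
    split_ifs with hv
    · by_contra hne
      set m' := Finsupp.single k 1 + m - Finsupp.single v 1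
      have hm' : ¬ C m' := fun hC' ↦ hm.2 (hk m (hC tsub_le_self hC'))
      have := hmax m' (Finset.mem_filter.mpr ⟨mem_support_iff.mpr hne, hm'⟩)
      simp [m', hvk] at this
    · rfl
  exact hm.2 (hk m (h _ (by rw [mem_support_iff, hcoeff]; exact mem_support_iff.mp hm.1)))

theorem forall_support_or_of_forall_support_sum_X_mul {R σ : Type*} [CommSemiring R]
    {i j k : σ} (hki : k ≠ i) (hkj : k ≠ j) {T : Finset σ} (hkT : k ∈ T) (α β : ℕ)
    {g : MvPolynomial σ R} (h : ∀ n ∈ ((∑ v ∈ T, X v) * g).support, α ≤ n i ∨ β ≤ n j) :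
    ∀ m ∈ g.support, α ≤ m i ∨ β ≤ m j :=
  forall_support_of_forall_support_sum_X_mul
    (fun _ _ hmm' ↦ Or.imp (·.trans (hmm' i)) (·.trans (hmm' j)))
    (fun m ↦ by simp [hki, hkj]) hkT h

end MvPolynomial

section

variable {A V : Type*}

theorem mem_wEdgeIdeal_iff [CommRing A] (G : SimpleGraph V) (w : Sym2 V → ℕ)
    (f : MvPolynomial V A) : f ∈ wEdgeIdeal A G w ↔
      ∀ m ∈ f.support, ∃ i j, G.Adj i j ∧ w s(i, j) ≤ m i ∧ w s(i, j) ≤ m j := by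
  have hspan : wEdgeIdeal A G w = Ideal.span ((monomial · (1 : A)) '' {m | ∃ i j, G.Adj i j ∧
      m = Finsupp.single i (w s(i, j)) + Finsupp.single j (w s(i, j))}) := by
    rw [wEdgeIdeal]
    congr 1
    ext f
    simp [X_pow_eq_monomial, monomial_mul, eq_comm]
  rw [hspan, mem_ideal_span_monomial_image]
  refine forall₂_congr fun m _ ↦ ⟨?_, ?_⟩
  · rintro ⟨_, ⟨i, j, hij, rfl⟩, hle⟩
    exact ⟨i, j, hij, (Finsupp.single_add_single_le_iff hij.ne).mp hle⟩
  · rintro ⟨i, j, hij, hle⟩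
    exact ⟨_, ⟨i, j, hij, rfl⟩, (Finsupp.single_add_single_le_iff hij.ne).mpr hle⟩

theorem wEdgeIdeal_le_of_forall_adj [CommRing A] {G : SimpleGraph V} {w : Sym2 V → ℕ}
    (hw : ∀ e ∈ G.edgeSet, 1 ≤ w e) {J : Ideal (MvPolynomial V A)}
    (hJ : ∀ i j, G.Adj i j → X i ∈ J ∨ X j ∈ J) : wEdgeIdeal A G w ≤ J := by
  rw [wEdgeIdeal, Ideal.span_le]
  rintro _ ⟨i, j, hij, rfl⟩
  have hw' : 0 < w s(i, j) := hw s(i, j) hij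
  rcases hJ i j hij with hi | hj
  · exact J.mul_mem_right _ (J.pow_mem_of_mem hi _ hw')
  · exact J.mul_mem_left _ (J.pow_mem_of_mem hj _ hw')

theorem exists_isVC_PPrime_le [CommRing A] [Fintype V] {G : SimpleGraph V} {w : Sym2 V → ℕ}
    {p : Ideal (MvPolynomial V A)} [hp : p.IsPrime] (hGp : wEdgeIdeal A G w ≤ p) :
    ∃ S, IsVC G S ∧ PPrime A S ≤ p := by
  classical
  refine ⟨Finset.univ.filter (X · ∈ p), fun i j hij ↦ ?_, ?_⟩
  · simpa using (hp.mem_or_mem (hGp (Ideal.subset_span ⟨i, j, hij, rfl⟩))).imp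
      (hp.mem_of_pow_mem _) (hp.mem_of_pow_mem _)
  · rw [PPrime, Ideal.span_le]
    rintro _ ⟨v, hv, rfl⟩
    simpa using hv

theorem ringKrullDim_quotient_PPrime_le [Field A] [Finite V] (S : Finset V) :
    ringKrullDim (MvPolynomial V A ⧸ PPrime A S) ≤ Nat.card {v // v ∉ S} := by
  classical
  let φ : MvPolynomial {v // v ∉ S} A →ₐ[A] MvPolynomial V A ⧸ PPrime A S :=
    aeval fun v ↦ Ideal.Quotient.mk _ (X v)
  have hφ : φ.comp (killCompl Subtype.val_injective) = Ideal.Quotient.mkₐ A _ := by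
    ext v
    by_cases hv : v ∈ S
    · have hX : X v ∈ PPrime A S := Ideal.subset_span ⟨v, hv, rfl⟩
      simp [φ, killCompl, hv, Ideal.Quotient.eq_zero_iff_mem.mpr hX]
    · simp [φ, killCompl, hv, Equiv.apply_ofInjective_symm]
  calc ringKrullDim (MvPolynomial V A ⧸ PPrime A S)
      ≤ ringKrullDim (MvPolynomial {v // v ∉ S} A) :=
        ringKrullDim_le_of_surjective φ.toRingHom fun y ↦ by
          obtain ⟨x, rfl⟩ := Ideal.Quotient.mk_surjective y
          exact ⟨killCompl Subtype.val_injective x, congrArg (· x) hφ⟩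
    _ = Nat.card {v // v ∉ S} := by simp [ringKrullDim_eq_zero_of_field]

theorem ringKrullDim_quotient_wEdgeIdeal_le [Field A] [Fintype V] (G : SimpleGraph V)
    (w : Sym2 V → ℕ) {n : ℕ} (hn : ∀ S, IsVC G S → Nat.card {v // v ∉ S} ≤ n) :
    ringKrullDim (MvPolynomial V A ⧸ wEdgeIdeal A G w) ≤ n := by
  classical
  refine ringKrullDim_quotient_le_of_forall_isPrime _ (fun S : {S // IsVC G S} ↦ PPrime A S.1)
    (fun S ↦ (ringKrullDim_quotient_PPrime_le S.1).trans (by exact_mod_cast hn S.1 S.2))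
    fun p _ hIp ↦ ?_
  obtain ⟨S, hS, hSp⟩ := exists_isVC_PPrime_le hIp
  exact ⟨⟨S, hS⟩, hSp⟩

theorem le_ringKrullDim_quotient_wEdgeIdeal [Field A] [Finite V] {G : SimpleGraph V}
    {w : Sym2 V → ℕ} (hw : ∀ e ∈ G.edgeSet, 1 ≤ w e) {S : Finset V} (hS : IsVC G S) :
    (Nat.card {v // v ∉ S} : WithBot ℕ∞) ≤ ringKrullDim (MvPolynomial V A ⧸ wEdgeIdeal A G w) := by
  let ψ := killCompl (R := A) (Subtype.val_injective (p := fun v ↦ v ∉ S))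
  have hψ : wEdgeIdeal A G w ≤ RingHom.ker ψ :=
    wEdgeIdeal_le_of_forall_adj hw fun i j hij ↦ by simpa [ψ, killCompl] using hS i j hij
  calc (Nat.card {v // v ∉ S} : WithBot ℕ∞)
      = ringKrullDim (MvPolynomial {v // v ∉ S} A) := by simp [ringKrullDim_eq_zero_of_field]
    _ ≤ _ := ringKrullDim_le_of_surjective (Ideal.Quotient.lift _ ψ.toRingHom hψ)
        (Ideal.Quotient.lift_surjective_of_surjective _ _ fun x ↦
          ⟨rename Subtype.val x, killCompl_rename_app _ x⟩)

theorem quotIsCM_of_ringKrullDim_eq_one [Field A] {I : Ideal (MvPolynomial V A)}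
    (hI : I ≤ Ideal.span (Set.range X)) {f : MvPolynomial V A} (hf : f ∈ Ideal.span (Set.range X))
    (hreg : ∀ g, f * g ∈ I → g ∈ I) (hdim : ringKrullDim (MvPolynomial V A ⧸ I) = 1) :
    QuotIsCM A I := by
  have hX : Ideal.span (Set.range X) ≤ RingHom.ker (constantCoeff : MvPolynomial V A →+* A) :=
    Ideal.span_le.mpr (by rintro _ ⟨v, rfl⟩; simp)
  let χ := Ideal.Quotient.lift I constantCoeff fun g hg ↦ hX (hI hg)
  have hχ : χ (Ideal.Quotient.mk I f) = 0 := RingHom.mem_ker.mp (hX hf)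
  refine ⟨[Ideal.Quotient.mk I f],
    fun x hx ↦ List.mem_singleton.mp hx ▸ Ideal.mem_map_of_mem _ hf,
    ⟨(RingTheory.Sequence.isWeaklyRegular_singleton_iff _ _).mpr ?_, ?_⟩, by rw [hdim]; rfl⟩
  · intro x y hxy
    obtain ⟨x, rfl⟩ := Ideal.Quotient.mk_surjective x
    obtain ⟨y, rfl⟩ := Ideal.Quotient.mk_surjective y
    change Ideal.Quotient.mk I f * _ = Ideal.Quotient.mk I f * _ at hxy
    rw [← map_mul, ← map_mul, Ideal.Quotient.eq] at hxy
    rw [Ideal.Quotient.eq]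
    exact hreg _ (by rwa [mul_sub])
  · rw [Ideal.ofList_singleton, Ideal.smul_eq_mul, Ideal.mul_top, ne_comm, Ne,
      Ideal.span_singleton_eq_top]
    exact fun h ↦ not_isUnit_zero (hχ ▸ h.map χ)

end

theorem cycleG_three_adj {i j : Fin 3} : (cycleG 3).Adj i j ↔ i ≠ j := by
  fin_cases i <;> fin_cases j <;> simp [cycleG]

section

variable {A : Type*}

theorem mem_wEdgeIdeal_cycleG_three_iff [CommRing A] (w : Sym2 (Fin 3) → ℕ)
    (f : MvPolynomial (Fin 3) A) :
    f ∈ wEdgeIdeal A (cycleG 3) w ↔ ∀ m ∈ f.support,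
      (w s(0, 1) ≤ m 0 ∧ w s(0, 1) ≤ m 1) ∨ (w s(1, 2) ≤ m 1 ∧ w s(1, 2) ≤ m 2) ∨
        (w s(2, 0) ≤ m 2 ∧ w s(2, 0) ≤ m 0) := by
  rw [mem_wEdgeIdeal_iff]
  refine forall₂_congr fun m _ ↦ ⟨?_, ?_⟩
  · have e₁ : s((1 : Fin 3), 0) = s(0, 1) := Sym2.eq_swap
    have e₂ : s((2 : Fin 3), 1) = s(1, 2) := Sym2.eq_swap
    have e₃ : s((0 : Fin 3), 2) = s(2, 0) := Sym2.eq_swap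
    rintro ⟨i, j, hij, h⟩
    rw [cycleG_three_adj] at hij
    fin_cases i <;> fin_cases j <;> simp only [Fin.reduceFinMk, Fin.isValue, e₁, e₂, e₃] at h <;>
      tauto
  · rintro (h | h | h)
    exacts [⟨0, 1, by simp [cycleG_three_adj], h⟩, ⟨1, 2, by simp [cycleG_three_adj], h⟩,
      ⟨2, 0, by simp [cycleG_three_adj], h⟩]

theorem mem_wEdgeIdeal_cycleG_three_of_sum_X_mul_mem [CommRing A] (w : Sym2 (Fin 3) → ℕ)
    {g : MvPolynomial (Fin 3) A} (h : (∑ v : Fin 3, X v) * g ∈ wEdgeIdeal A (cycleG 3) w) :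
    g ∈ wEdgeIdeal A (cycleG 3) w := by
  rw [mem_wEdgeIdeal_cycleG_three_iff] at h ⊢
  set a := w s(0, 1)
  set b := w s(1, 2)
  set c := w s(2, 0)
  have clause {i j k : Fin 3} (hki : k ≠ i) (hkj : k ≠ j) (α β : ℕ)
      (hP : ∀ n : Fin 3 →₀ ℕ, (a ≤ n 0 ∧ a ≤ n 1) ∨ (b ≤ n 1 ∧ b ≤ n 2) ∨ (c ≤ n 2 ∧ c ≤ n 0) →
        α ≤ n i ∨ β ≤ n j) :
      ∀ m ∈ g.support, α ≤ m i ∨ β ≤ m j :=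
    MvPolynomial.forall_support_or_of_forall_support_sum_X_mul hki hkj (Finset.mem_univ k) α β
      fun n hn ↦ hP n (h n hn)
  intro m hm
  -- the six two-variable clauses of the CNF; the two three-variable clauses follow from them
  have := clause (i := 0) (j := 1) (k := 2) (by decide) (by decide) (min a c) b (by omega) m hm
  have := clause (i := 0) (j := 2) (k := 1) (by decide) (by decide) a (min b c) (by omega) m hm
  have := clause (i := 0) (j := 2) (k := 1) (by decide) (by decide) (min a c) b (by omega) m hm
  have := clause (i := 1) (j := 2) (k := 0) (by decide) (by decide) (min a b) c (by omega) m hm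
  have := clause (i := 1) (j := 0) (k := 2) (by decide) (by decide) (min a b) c (by omega) m hm
  have := clause (i := 1) (j := 2) (k := 0) (by decide) (by decide) a (min b c) (by omega) m hm
  omega

theorem ringKrullDim_quotient_wEdgeIdeal_cycleG_three [Field A] {w : Sym2 (Fin 3) → ℕ}
    (hw : ∀ e ∈ (cycleG 3).edgeSet, 1 ≤ w e) :
    ringKrullDim (MvPolynomial (Fin 3) A ⧸ wEdgeIdeal A (cycleG 3) w) = 1 := by
  refine le_antisymm (ringKrullDim_quotient_wEdgeIdeal_le _ _ fun S hS ↦ ?_) ?_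
  · refine Finite.card_le_one_iff_subsingleton.mpr ⟨fun u v ↦ Subtype.ext ?_⟩
    by_contra huv
    exact (hS u v (cycleG_three_adj.mpr huv)).elim u.2 v.2
  · have hS : IsVC (cycleG 3) {0, 1} := fun i j hij ↦ by
      rw [cycleG_three_adj] at hij
      fin_cases i <;> fin_cases j <;> simp_all
    have hcard : Nat.card {v // v ∉ ({0, 1} : Finset (Fin 3))} = 1 := by
      rw [Nat.card_eq_fintype_card]; rfl
    simpa only [hcard, Nat.cast_one] using le_ringKrullDim_quotient_wEdgeIdeal (A := A) hw hS

end

/-- every weighted 3-cycle is Cohen-Macaulay. -/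
theorem stmt_17 (A : Type*) [Field A] (w : Sym2 (Fin 3) → ℕ)
    (hw : ∀ e ∈ (cycleG 3).edgeSet, 1 ≤ w e) :
    QuotIsCM A (wEdgeIdeal A (cycleG 3) w) :=
  quotIsCM_of_ringKrullDim_eq_one
    (wEdgeIdeal_le_of_forall_adj hw fun i _ _ ↦ .inl (Ideal.subset_span ⟨i, rfl⟩))
    (Ideal.sum_mem _ fun v _ ↦ Ideal.subset_span ⟨v, rfl⟩)
    (fun _ ↦ mem_wEdgeIdeal_cycleG_three_of_sum_X_mul_mem w)
    (ringKrullDim_quotient_wEdgeIdeal_cycleG_three hw)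
end
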